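/- Suppose Assumption (A) holds with p ≠ 1 (and p ≥ −n). Then B_p^φ(Λ_p^φ K) = n^n · (V(K)/V(Λ_p^φ K))^{n−1} · A_p^φ(K), where for p = 0 the functionals are B_0^φ and A_0^φ. -/

import Mathlib

open MeasureTheory Metric Filter Set Pointwise Topology

noncomputable section

namespace CurvIter

variable {n : ℕ}

/-- Euclidean `n`-space. -/
abbrev Euc (n : ℕ) : Type := EuclideanSpace ℝ (Fin n)

/-- Spherical Lebesgue measure `σ`: the `(n-1)`-dimensional Hausdorff measure restricted
to the unit sphere `S^{n-1}`. -/
def sphereσ (n : ℕ) : Measure (Euc n) :=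
  (μH[((n : ℝ) - 1)]).restrict (sphere (0 : Euc n) 1)

/-- A convex body: a compact convex set with nonempty interior. -/
def IsConvexBody (K : Set (Euc n)) : Prop :=
  Convex ℝ K ∧ IsCompact K ∧ (interior K).Nonempty

/-- The support function `h_K(u) = sup_{x ∈ K} ⟪x, u⟫`. -/
def suppFn (K : Set (Euc n)) (u : Euc n) : ℝ :=
  sSup ((fun x => (inner ℝ x u : ℝ)) '' K)

/-- `ν_K^{-1}(ω)`: the set of boundary points of `K` having an outer unit normal in `ω`. -/
def reverseGauss (K ω : Set (Euc n)) : Set (Euc n) :=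
  {x | x ∈ frontier K ∧ ∃ u ∈ ω, u ∈ sphere (0 : Euc n) 1 ∧
      ∀ y ∈ K, (inner ℝ y u : ℝ) ≤ (inner ℝ x u : ℝ)}

/-- `f` is a positive continuous curvature function for `K`:
`f` is positive and continuous on the sphere and `dS_K = f dσ`. -/
def IsCurvFn (K : Set (Euc n)) (f : Euc n → ℝ) : Prop :=
  ContinuousOn f (sphere (0 : Euc n) 1) ∧
  (∀ u ∈ sphere (0 : Euc n) 1, 0 < f u) ∧
  ∀ ω : Set (Euc n), MeasurableSet ω →
    μH[((n : ℝ) - 1)] (reverseGauss K ω) = ENNReal.ofReal (∫ u in ω, f u ∂(sphereσ n))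

/-- The prescribed curvature function of the `L_p` curvature image `Λ_p^φ K`:
`f = [V(K) / ((1/n) ∫ h_K^p/φ dσ)] ⬝ h_K^{p-1}/φ`. -/
def lpCurvFn (p : ℝ) (φ : Euc n → ℝ) (K : Set (Euc n)) : Euc n → ℝ :=
  fun u =>
    ((volume K).toReal /
      ((1 / (n : ℝ)) * ∫ v, suppFn K v ^ p / φ v ∂(sphereσ n))) *
    (suppFn K u ^ (p - 1) / φ u)

/-- `L = Λ_p^φ K`: `L` is a convex body whose curvature function is `lpCurvFn p φ K`
and with `∫ u/(φ(u) h_L(u)^{1-p}) dσ(u) = 0`. -/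
def IsLpCurvImage (p : ℝ) (φ : Euc n → ℝ) (K L : Set (Euc n)) : Prop :=
  IsConvexBody L ∧
  IsCurvFn L (lpCurvFn p φ K) ∧
  (∫ u, (1 / (φ u * suppFn L u ^ (1 - p))) • u ∂(sphereσ n)) = 0

/-- The polar body `K* = {y : ⟪x,y⟫ ≤ 1 ∀ x ∈ K}`. -/
def polarBody (K : Set (Euc n)) : Set (Euc n) :=
  {y | ∀ x ∈ K, (inner ℝ x y : ℝ) ≤ 1}

/-- `K` has its Santaló point at the origin: the origin is the interior point `x`
minimizing `V((K-x)*)`. -/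
def SantaloAtOrigin (K : Set (Euc n)) : Prop :=
  0 ∈ interior K ∧
  ∀ x ∈ interior K,
    volume (polarBody K) ≤ volume (polarBody ((fun y => y - x) '' K))

/-- The prescribed curvature function of the Petty curvature image `ΛK`:
`f_{ΛK} = (V(K)/V(K*)) ⬝ h_K^{-(n+1)}`. -/
def pettyCurvFn (K : Set (Euc n)) : Euc n → ℝ :=
  fun u => ((volume K).toReal / (volume (polarBody K)).toReal) * suppFn K u ^ (-(n : ℝ) - 1)

/-- `L = ΛK` is the Petty curvature image of `K`: a convex body with Santaló point at
the origin whose curvature function is `(V(K)/V(K*)) h_K^{-(n+1)}`. -/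
def IsPettyImage (K L : Set (Euc n)) : Prop :=
  IsConvexBody L ∧ SantaloAtOrigin L ∧ IsCurvFn L (pettyCurvFn K)

/-- Affine surface area `Ω(K) = ∫ f_K^{n/(n+1)} dσ`, as a functional of the curvature
function `f` of the body. -/
def ASA (n : ℕ) (f : Euc n → ℝ) : ℝ :=
  ∫ u, f u ^ ((n : ℝ) / ((n : ℝ) + 1)) ∂(sphereσ n)

/-- The functional `A_p^φ`. -/
def Afun (p : ℝ) (φ : Euc n → ℝ) (K : Set (Euc n)) : ℝ :=
  if p = 0 then
    (volume K).toReal *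
      Real.exp ((∫ u, -(1 / φ u) * Real.log (suppFn K u) ∂(sphereσ n)) /
        ((1 / (n : ℝ)) * ∫ u, 1 / φ u ∂(sphereσ n)))
  else
    (volume K).toReal * (∫ u, suppFn K u ^ p / φ u ∂(sphereσ n)) ^ (-(n : ℝ) / p)

/-- The functional `B_p^φ`, as a functional of the body `K` and its curvature function `f`. -/
def Bfun (p : ℝ) (φ : Euc n → ℝ) (K : Set (Euc n)) (f : Euc n → ℝ) : ℝ :=
  if p = 0 then
    (volume K).toReal ^ ((1 : ℤ) - (n : ℤ)) *
      Real.exp ((∫ u, (1 / φ u) * Real.log (φ u * f u) ∂(sphereσ n)) /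
        (∫ u, 1 / φ u ∂(sphereσ n))) ^ n *
      (∫ u, 1 / φ u ∂(sphereσ n)) ^ n
  else
    (volume K).toReal ^ ((1 : ℤ) - (n : ℤ)) *
      (∫ u, φ u ^ (1 / (p - 1)) * f u ^ (p / (p - 1)) ∂(sphereσ n)) ^ ((n : ℝ) * (p - 1) / p)

/-- The functional `Ω_p^φ`, as a functional of the curvature function `f` of the body. -/
def Ωfun (n : ℕ) (p : ℝ) (φ : Euc n → ℝ) (f : Euc n → ℝ) : ℝ :=
  if p = 0 then
    Real.exp ((∫ u, (1 / φ u) * Real.log (f u) ∂(sphereσ n)) /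
      ((1 / (n : ℝ)) * ∫ u, 1 / φ u ∂(sphereσ n)))
  else
    ∫ u, φ u ^ (1 / (p - 1)) * f u ^ (p / (p - 1)) ∂(sphereσ n)

/-- Assumption (A): the standing assumption on `p`, `φ` and `K`. -/
def AssumptionA (p : ℝ) (φ : Euc n → ℝ) (K : Set (Euc n)) : Prop :=
  IsConvexBody K ∧
  ContinuousOn φ (sphere (0 : Euc n) 1) ∧
  (∀ u ∈ sphere (0 : Euc n) 1, 0 < φ u) ∧
  ( (-(n : ℝ) < p ∧ p ≠ 1 ∧ (∀ u, φ (-u) = φ u) ∧ (∀ x ∈ K, -x ∈ K))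
  ∨ (-(n : ℝ) < p ∧ p ≤ -(n : ℝ) + 1 ∧ 0 ∈ interior K ∧
      (∫ u, (1 / (φ u * suppFn K u ^ (1 - p))) • u ∂(sphereσ n)) = 0)
  ∨ (-(n : ℝ) ≤ p ∧ p ≠ 1 ∧ φ = (fun _ => 1) ∧ 0 ∈ interior K ∧
      (∫ u, (suppFn K u ^ (p - 1)) • u ∂(sphereσ n)) = 0) )

end CurvIter

open CurvIter

/-! The curvature function of `Λ_p^φ K` is `c h_K^{p-1}/φ` with `c ∫ h_K^p/φ dσ = n V(K)`.
Substituting it, the integral in `B_p^φ` becomes `c^{p/(p-1)} ∫ h_K^p/φ dσ` (for `p = 0`, the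
logarithmic integral becomes `log c ∫ 1/φ dσ - ∫ log h_K/φ dσ`), so raising to the power
`n(p-1)/p` leaves `(n V(K))^n` times exactly the factor by which `A_p^φ(K)` exceeds `V(K)`. -/

theorem Convex.zero_mem_interior_of_neg_mem {E : Type*} [AddCommGroup E] [Module ℝ E]
    [TopologicalSpace E] [IsTopologicalAddGroup E] [ContinuousSMul ℝ E] {s : Set E}
    (hs : Convex ℝ s) (hneg : ∀ x ∈ s, -x ∈ s) (hint : (interior s).Nonempty) :
    0 ∈ interior s := by
  obtain ⟨x, hx⟩ := hint
  have hmid := hs.combo_interior_self_mem_interior hx (hneg x (interior_subset hx))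
    (by norm_num : (0 : ℝ) < 1 / 2) (by norm_num : (0 : ℝ) ≤ 1 / 2) (by norm_num)
  rwa [show (1 / 2 : ℝ) • x + (1 / 2 : ℝ) • -x = 0 by module] at hmid

namespace CurvIter

variable {n : ℕ}

theorem ae_mem_sphere_sphereσ : ∀ᵐ u ∂(sphereσ n), u ∈ sphere (0 : Euc n) 1 :=
  ae_restrict_mem isClosed_sphere.measurableSet

theorem integral_sphereσ_congr {f g : Euc n → ℝ} (h : ∀ u ∈ sphere (0 : Euc n) 1, f u = g u) :
    ∫ u, f u ∂(sphereσ n) = ∫ u, g u ∂(sphereσ n) :=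
  integral_congr_ae (ae_mem_sphere_sphereσ.mono h)

theorem integrable_mul_of_continuousOn_sphere {f g : Euc n → ℝ} (hf : Integrable f (sphereσ n))
    (hg : ContinuousOn g (sphere (0 : Euc n) 1)) :
    Integrable (fun u => f u * g u) (sphereσ n) := by
  obtain ⟨C, hC⟩ := (isCompact_sphere (0 : Euc n) 1).exists_bound_of_continuousOn hg
  exact hf.mul_bdd (hg.aestronglyMeasurable isClosed_sphere.measurableSet)
    (ae_mem_sphere_sphereσ.mono hC)

theorem continuous_suppFn {K : Set (Euc n)} (hK : IsCompact K) : Continuous (suppFn K) :=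
  hK.continuous_sSup (f := fun u x => (inner ℝ x u : ℝ)) (by fun_prop)

theorem suppFn_pos {K : Set (Euc n)} (hK : IsCompact K) (h0 : 0 ∈ interior K) {u : Euc n}
    (hu : u ∈ sphere (0 : Euc n) 1) : 0 < suppFn K u := by
  have hu1 : ‖u‖ = 1 := mem_sphere_zero_iff_norm.1 hu
  obtain ⟨ε, hε, hball⟩ := Metric.mem_nhds_iff.1 (mem_interior_iff_mem_nhds.1 h0)
  have hmem : (ε / 2) • u ∈ K := hball <| by
    rw [mem_ball_zero_iff, norm_smul, hu1, mul_one, Real.norm_of_nonneg (by positivity)]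
    linarith
  have hbdd : BddAbove ((fun x => (inner ℝ x u : ℝ)) '' K) :=
    (hK.image (continuous_id.inner continuous_const)).bddAbove
  calc (0 : ℝ) < ε / 2 := by positivity
    _ = inner ℝ ((ε / 2) • u) u := by
      rw [real_inner_smul_left, real_inner_self_eq_norm_sq, hu1]; ring
    _ ≤ suppFn K u := le_csSup hbdd ⟨_, hmem, rfl⟩

theorem AssumptionA.zero_mem_interior {p : ℝ} {φ : Euc n → ℝ} {K : Set (Euc n)}
    (hA : AssumptionA p φ K) : 0 ∈ interior K := by
  obtain ⟨hK, -, -, ⟨-, -, -, hneg⟩ | ⟨-, -, h0, -⟩ | ⟨-, -, -, h0, -⟩⟩ := hA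
  · exact hK.1.zero_mem_interior_of_neg_mem hneg hK.2.2
  all_goals exact h0

def lpCurvConst (p : ℝ) (φ : Euc n → ℝ) (K : Set (Euc n)) : ℝ :=
  (volume K).toReal / ((1 / (n : ℝ)) * ∫ v, suppFn K v ^ p / φ v ∂(sphereσ n))

theorem lpCurvFn_eq (p : ℝ) (φ : Euc n → ℝ) (K : Set (Euc n)) :
    lpCurvFn p φ K = fun u => lpCurvConst p φ K * (suppFn K u ^ (p - 1) / φ u) :=
  rfl

theorem lpCurvConst_pos_of_isCurvFn (hn : n ≠ 0) {p : ℝ} {φ : Euc n → ℝ} {K L : Set (Euc n)}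
    (hφ : ∀ u ∈ sphere (0 : Euc n) 1, 0 < φ u) (hh : ∀ u ∈ sphere (0 : Euc n) 1, 0 < suppFn K u)
    (hf : IsCurvFn L (lpCurvFn p φ K)) : 0 < lpCurvConst p φ K := by
  have : Nonempty (Fin n) := ⟨⟨0, Nat.pos_of_ne_zero hn⟩⟩
  obtain ⟨u, hu⟩ := (NormedSpace.sphere_nonempty (x := (0 : Euc n))).2 zero_le_one
  exact pos_of_mul_pos_left (hf.2.1 u hu) (div_pos (Real.rpow_pos_of_pos (hh u hu) _) (hφ u hu)).le

/-- As `V(K) ≥ 0`, this gets positivity of the integral from that of the prescribed curvature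
function, without a lower bound for `σ`. -/
theorem integral_pos_of_lpCurvConst_pos {p : ℝ} {φ : Euc n → ℝ} {K : Set (Euc n)}
    (hc : 0 < lpCurvConst p φ K) : 0 < ∫ v, suppFn K v ^ p / φ v ∂(sphereσ n) := by
  rcases div_pos_iff.1 hc with ⟨-, hI⟩ | ⟨hV, -⟩
  · exact pos_of_mul_pos_right hI (by positivity)
  · exact absurd hV ENNReal.toReal_nonneg.not_gt

theorem lpCurvConst_mul_integral (hn : n ≠ 0) {p : ℝ} {φ : Euc n → ℝ} {K : Set (Euc n)}
    (hI : (∫ v, suppFn K v ^ p / φ v ∂(sphereσ n)) ≠ 0) :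
    lpCurvConst p φ K * ∫ v, suppFn K v ^ p / φ v ∂(sphereσ n) = n * (volume K).toReal := by
  have : (n : ℝ) ≠ 0 := Nat.cast_ne_zero.2 hn
  rw [lpCurvConst]
  field_simp

theorem integral_rpow_mul_lpCurvFn_rpow {p : ℝ} (hp : p ≠ 1) {φ : Euc n → ℝ} {K : Set (Euc n)}
    (hφ : ∀ u ∈ sphere (0 : Euc n) 1, 0 < φ u) (hh : ∀ u ∈ sphere (0 : Euc n) 1, 0 ≤ suppFn K u)
    (hc : 0 ≤ lpCurvConst p φ K) :
    ∫ u, φ u ^ (1 / (p - 1)) * lpCurvFn p φ K u ^ (p / (p - 1)) ∂(sphereσ n) =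
      lpCurvConst p φ K ^ (p / (p - 1)) * ∫ u, suppFn K u ^ p / φ u ∂(sphereσ n) := by
  rw [← integral_const_mul]
  refine integral_sphereσ_congr fun u hu => ?_
  have hφu := hφ u hu
  have hhu := hh u hu
  have hp1 : p - 1 ≠ 0 := sub_ne_zero.2 hp
  have hh_rpow : (suppFn K u ^ (p - 1)) ^ (p / (p - 1)) = suppFn K u ^ p := by
    rw [← Real.rpow_mul hhu]
    congr 1
    field_simp
  have hφ_rpow : φ u ^ (1 / (p - 1)) = φ u ^ (p / (p - 1)) / φ u := by
    rw [eq_div_iff hφu.ne', ← Real.rpow_add_one hφu.ne']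
    congr 1
    field_simp
    ring
  rw [lpCurvFn_eq, Real.mul_rpow hc (by positivity), Real.div_rpow (by positivity) hφu.le,
    hh_rpow, hφ_rpow]
  field_simp

theorem Bfun_lpCurvFn_of_ne_zero {p : ℝ} (hp0 : p ≠ 0) (hp : p ≠ 1) {φ : Euc n → ℝ}
    {K L : Set (Euc n)} (hφ : ∀ u ∈ sphere (0 : Euc n) 1, 0 < φ u)
    (hh : ∀ u ∈ sphere (0 : Euc n) 1, 0 ≤ suppFn K u) (hc : 0 ≤ lpCurvConst p φ K)
    (hI : 0 < ∫ u, suppFn K u ^ p / φ u ∂(sphereσ n)) :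
    Bfun p φ L (lpCurvFn p φ K) =
      (volume L).toReal ^ ((1 : ℤ) - n) *
        (lpCurvConst p φ K * ∫ u, suppFn K u ^ p / φ u ∂(sphereσ n)) ^ n *
        (∫ u, suppFn K u ^ p / φ u ∂(sphereσ n)) ^ (-(n : ℝ) / p) := by
  have hp1 : p - 1 ≠ 0 := sub_ne_zero.2 hp
  rw [Bfun, if_neg hp0, integral_rpow_mul_lpCurvFn_rpow hp hφ hh hc,
    Real.mul_rpow (by positivity) hI.le, ← Real.rpow_mul hc,
    show p / (p - 1) * (n * (p - 1) / p) = (n : ℝ) by field_simp,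
    show (n : ℝ) * (p - 1) / p = n + -n / p by field_simp; ring,
    Real.rpow_add hI, Real.rpow_natCast, Real.rpow_natCast, mul_pow]
  ring

theorem integral_inv_mul_log_mul_lpCurvFn_zero {φ : Euc n → ℝ} {K : Set (Euc n)}
    (hφ : ∀ u ∈ sphere (0 : Euc n) 1, 0 < φ u) (hh : ∀ u ∈ sphere (0 : Euc n) 1, 0 < suppFn K u)
    (hc : 0 < lpCurvConst 0 φ K) (hJ : Integrable (fun u => 1 / φ u) (sphereσ n))
    (hT : Integrable (fun u => -(1 / φ u) * Real.log (suppFn K u)) (sphereσ n)) :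
    ∫ u, 1 / φ u * Real.log (φ u * lpCurvFn 0 φ K u) ∂(sphereσ n) =
      Real.log (lpCurvConst 0 φ K) * (∫ u, 1 / φ u ∂(sphereσ n)) +
        ∫ u, -(1 / φ u) * Real.log (suppFn K u) ∂(sphereσ n) := by
  rw [← integral_const_mul, ← integral_add (hJ.const_mul _) hT]
  refine integral_sphereσ_congr fun u hu => ?_
  have hφu := hφ u hu
  have hhu := hh u hu
  have hf : φ u * lpCurvFn 0 φ K u = lpCurvConst 0 φ K * (suppFn K u)⁻¹ := by
    simp only [lpCurvFn_eq, zero_sub, Real.rpow_neg_one]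
    field_simp
  rw [hf, Real.log_mul hc.ne' (inv_ne_zero hhu.ne'), Real.log_inv]
  ring

theorem Bfun_zero_lpCurvFn {φ : Euc n → ℝ} {K L : Set (Euc n)}
    (hφ : ∀ u ∈ sphere (0 : Euc n) 1, 0 < φ u) (hh : ∀ u ∈ sphere (0 : Euc n) 1, 0 < suppFn K u)
    (hc : 0 < lpCurvConst 0 φ K) (hJ : (∫ u, 1 / φ u ∂(sphereσ n)) ≠ 0)
    (hT : Integrable (fun u => -(1 / φ u) * Real.log (suppFn K u)) (sphereσ n)) :
    Bfun 0 φ L (lpCurvFn 0 φ K) =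
      (volume L).toReal ^ ((1 : ℤ) - n) *
        (lpCurvConst 0 φ K * ∫ u, 1 / φ u ∂(sphereσ n)) ^ n *
        Real.exp ((∫ u, -(1 / φ u) * Real.log (suppFn K u) ∂(sphereσ n)) /
          ((1 / (n : ℝ)) * ∫ u, 1 / φ u ∂(sphereσ n))) := by
  rw [Bfun, if_pos rfl,
    integral_inv_mul_log_mul_lpCurvFn_zero hφ hh hc (Integrable.of_integral_ne_zero hJ) hT]
  set J := ∫ u, 1 / φ u ∂(sphereσ n)
  set S := ∫ u, -(1 / φ u) * Real.log (suppFn K u) ∂(sphereσ n)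
  rw [show (Real.log (lpCurvConst 0 φ K) * J + S) / J = Real.log (lpCurvConst 0 φ K) + S / J by
      field_simp,
    Real.exp_add, Real.exp_log hc,
    show S / (1 / (n : ℝ) * J) = n * (S / J) by
      rw [one_div, div_mul_eq_div_div, div_inv_eq_mul]; ring,
    Real.exp_nat_mul]
  ring

end CurvIter

theorem zpow_one_sub_mul_mul_pow_mul {n : ℕ} (hn : n ≠ 0) (a b m x : ℝ) :
    b ^ ((1 : ℤ) - n) * (m * a) ^ n * x = m ^ n * (a / b) ^ (n - 1) * (a * x) := by
  obtain ⟨k, rfl⟩ := Nat.exists_eq_add_one_of_ne_zero hn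
  rw [Nat.add_sub_cancel, show (1 : ℤ) - (k + 1 : ℕ) = -k by push_cast; ring, zpow_neg,
    zpow_natCast]
  ring

open CurvIter

/-- the key identity
`B_p^φ(Λ_p^φ K) = n^n (V(K)/V(Λ_p^φ K))^{n-1} A_p^φ(K)`. -/
theorem key_identity (n : ℕ) (hn : 2 ≤ n) (p : ℝ) (hp : p ≠ 1)
    (φ : Euc n → ℝ) (K L : Set (Euc n))
    (hA : AssumptionA p φ K)
    (hL : IsLpCurvImage p φ K L) :
    Bfun p φ L (lpCurvFn p φ K) =
      (n : ℝ) ^ n * ((volume K).toReal / (volume L).toReal) ^ (n - 1) * Afun p φ K := by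
  have hn0 : n ≠ 0 := by omega
  have h0 := hA.zero_mem_interior
  obtain ⟨hK, -, hφ, -⟩ := hA
  have hh : ∀ u ∈ sphere (0 : Euc n) 1, 0 < suppFn K u := fun u hu => suppFn_pos hK.2.1 h0 hu
  have hc := lpCurvConst_pos_of_isCurvFn hn0 hφ hh hL.2.1
  have hI := integral_pos_of_lpCurvConst_pos hc
  have hcI := lpCurvConst_mul_integral hn0 hI.ne'
  by_cases hp0 : p = 0
  · subst hp0
    simp only [Real.rpow_zero] at hI hcI
    have hlog : ContinuousOn (fun u => Real.log (suppFn K u)) (sphere (0 : Euc n) 1) :=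
      (continuous_suppFn hK.2.1).continuousOn.log fun u hu => (hh u hu).ne'
    have hT :=
      integrable_mul_of_continuousOn_sphere (Integrable.of_integral_ne_zero hI.ne').neg hlog
    rw [Bfun_zero_lpCurvFn hφ hh hc hI.ne' hT, hcI, Afun, if_pos rfl]
    exact zpow_one_sub_mul_mul_pow_mul hn0 _ _ _ _
  · rw [Bfun_lpCurvFn_of_ne_zero hp0 hp hφ (fun u hu => (hh u hu).le) hc.le hI, hcI, Afun,
      if_neg hp0]
    exact zpow_one_sub_mul_mul_pow_mul hn0 _ _ _ _
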